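/- For all -1 ≤ y_{c1} < y_{c2} ≤ 1 with (y_{c1}, y_{c2}) ≠ (-1, 1), one has SI_1^{C(y_{c1},y_{c2})} = (|y_{c2}| - |y_{c1}|)^2 / ((y_{c2} - y_{c1})(2 - y_{c2} + y_{c1})) ≤ 1, with equality if and only if (y_{c1}, y_{c2}) = (-1, 0) or (y_{c1}, y_{c2}) = (0, 1). -/

import Mathlib

open MeasureTheory ProbabilityTheory Set

/-- The uniform probability measure on the square [-1,1] × [-1,1]. -/
noncomputable def unifSq : Measure (ℝ × ℝ) :=
  (4 : ENNReal)⁻¹ •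
    ((volume.restrict (Icc (-1 : ℝ) 1)).prod (volume.restrict (Icc (-1 : ℝ) 1)))

/-- sign(x) = 1 if x ≥ 0 and -1 if x < 0. -/
noncomputable def sgn (x : ℝ) : ℝ := if 0 ≤ x then 1 else -1

/-- The model output Y = sign(X1)·|X2|. -/
noncomputable def Ymod (ω : ℝ × ℝ) : ℝ := sgn ω.1 * |ω.2|

/-- The membership indicator 1_C(Y). -/
noncomputable def indC (C : Set ℝ) (ω : ℝ × ℝ) : ℝ := C.indicator 1 (Ymod ω)

/-- Region-based first-order Sobol' index of input X (given as a coordinate map)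
for the region C : Var(E[1_C(Y) | X]) / Var(1_C(Y)). -/
noncomputable def SIdx (X : ℝ × ℝ → ℝ) (C : Set ℝ) : ℝ :=
  variance (unifSq[indC C | MeasurableSpace.comap X inferInstance]) unifSq /
    variance (indC C) unifSq

section Aux

lemma variance_congr' {Ω : Type*} {m : MeasurableSpace Ω} {f g : Ω → ℝ} {μ : Measure Ω}
    (h : f =ᵐ[μ] g) : variance f μ = variance g μ := by
  unfold variance evariance
  have hi : μ[f] = μ[g] := integral_congr_ae h
  congr 1
  refine lintegral_congr_ae ?_
  filter_upwards [h] with ω hω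
  rw [hω, hi]

lemma vol_r_univ : (volume.restrict (Icc (-1 : ℝ) 1)) univ = 2 := by
  rw [Measure.restrict_apply_univ, Real.volume_Icc]
  norm_num

lemma vol_r_ne_top (u : Set ℝ) : (volume.restrict (Icc (-1 : ℝ) 1)) u ≠ ⊤ := by
  refine (lt_of_le_of_lt (measure_mono (subset_univ u)) ?_).ne
  rw [vol_r_univ]; norm_num

instance : IsProbabilityMeasure unifSq := by
  constructor
  rw [unifSq, Measure.smul_apply, ← Set.univ_prod_univ, Measure.prod_prod, vol_r_univ,
    smul_eq_mul]
  rw [show (2:ENNReal)*2 = 4 by norm_num, ENNReal.inv_mul_cancel] <;> norm_num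

lemma vol_r_Ici : (volume.restrict (Icc (-1 : ℝ) 1)) (Ici 0) = 1 := by
  rw [Measure.restrict_apply measurableSet_Ici]
  have : Ici (0:ℝ) ∩ Icc (-1) 1 = Icc 0 1 := by
    ext y; simp only [mem_inter_iff, mem_Ici, mem_Icc]; constructor
    · rintro ⟨h, -, h2⟩; exact ⟨h, h2⟩
    · rintro ⟨h, h2⟩; exact ⟨h, by linarith, h2⟩
  rw [this, Real.volume_Icc]; norm_num

lemma vol_r_Iio : (volume.restrict (Icc (-1 : ℝ) 1)) (Iio 0) = 1 := by
  rw [Measure.restrict_apply measurableSet_Iio]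
  have : Iio (0:ℝ) ∩ Icc (-1) 1 = Ico (-1) 0 := by
    ext y; simp only [mem_inter_iff, mem_Iio, mem_Icc, mem_Ico]; constructor
    · rintro ⟨h, h1, -⟩; exact ⟨h1, h⟩
    · rintro ⟨h1, h⟩; exact ⟨h, h1, by linarith⟩
  rw [this, Real.volume_Ico]; norm_num

lemma measurable_absB (u v : ℝ) : MeasurableSet {y : ℝ | |y| ∈ Icc u v} :=
  measurable_abs measurableSet_Icc

lemma measB (u v : ℝ) (huv : u ≤ v) (hv : v ≤ 1) :
    volume ({y : ℝ | |y| ∈ Icc u v} ∩ Icc (-1 : ℝ) 1) =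
      ENNReal.ofReal (2 * (max v 0 - max u 0)) := by
  rcases lt_or_ge v 0 with h | h
  · have : {y : ℝ | |y| ∈ Icc u v} = (∅ : Set ℝ) := by
      ext y; simp only [mem_Icc, mem_setOf_eq, mem_empty_iff_false, iff_false, not_and, not_le]
      intro _; exact lt_of_lt_of_le h (abs_nonneg y)
    rw [this, empty_inter, measure_empty]
    rw [max_eq_right h.le, max_eq_right (huv.trans h.le)]
    simp
  rcases le_or_gt u 0 with hu | hu
  · have hB : {y : ℝ | |y| ∈ Icc u v} = Icc (-v) v := by
      ext y
      simp only [mem_Icc, mem_setOf_eq, abs_le]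
      constructor
      · rintro ⟨-, h2⟩; exact h2
      · intro h2; exact ⟨hu.trans (abs_nonneg y), h2⟩
    rw [hB, inter_eq_self_of_subset_left (Icc_subset_Icc (by linarith) hv),
      Real.volume_Icc, max_eq_left h, max_eq_right hu]
    ring_nf
  · have hB : {y : ℝ | |y| ∈ Icc u v} = Icc (-v) (-u) ∪ Icc u v := by
      ext y
      simp only [mem_Icc, mem_setOf_eq, mem_union]
      rcases le_or_gt 0 y with hy | hy
      · rw [abs_of_nonneg hy]
        constructor
        · intro h2; exact Or.inr h2
        · rintro (⟨h2, h3⟩ | h2)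
          · constructor <;> linarith
          · exact h2
      · rw [abs_of_neg hy]
        constructor
        · intro h2; exact Or.inl ⟨by linarith [h2.2], by linarith [h2.1]⟩
        · rintro (⟨h2, h3⟩ | ⟨h2, h3⟩) <;> constructor <;> linarith
    rw [hB, inter_eq_self_of_subset_left]
    · rw [measure_union ?_ measurableSet_Icc, Real.volume_Icc, Real.volume_Icc,
        max_eq_left h, max_eq_left hu.le]
      · rw [← ENNReal.ofReal_add (by linarith) (by linarith)]
        ring_nf
      · rw [Set.disjoint_left]
        intro y hy hy'
        have := hy.2; have := hy'.1
        linarith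
    · apply union_subset <;> apply Icc_subset_Icc <;> linarith

lemma measurable_Ymod : Measurable Ymod := by
  apply Measurable.mul ?_ (measurable_abs.comp measurable_snd)
  unfold sgn
  exact Measurable.ite (measurableSet_Ici.preimage measurable_fst) measurable_const
    measurable_const

end Aux

section Main

variable (y1 y2 : ℝ)

lemma preim_decomp :
    Ymod ⁻¹' Icc y1 y2 =
      (Ici (0:ℝ) ×ˢ {y : ℝ | |y| ∈ Icc y1 y2}) ∪
      (Iio (0:ℝ) ×ˢ {y : ℝ | |y| ∈ Icc (-y2) (-y1)}) := by
  ext ⟨x, y⟩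
  simp only [mem_preimage, Ymod, sgn, mem_union, mem_prod, mem_Ici, mem_Iio, mem_setOf_eq,
    mem_Icc]
  rcases le_or_gt 0 x with hx | hx
  · rw [if_pos hx]
    simp only [one_mul]
    constructor
    · intro h; exact Or.inl ⟨hx, h⟩
    · rintro (⟨-, h⟩ | ⟨h, -⟩)
      · exact h
      · exact absurd h (not_lt.2 hx)
  · rw [if_neg (not_le.2 hx)]
    constructor
    · intro h; exact Or.inr ⟨hx, by constructor <;> linarith [h.1, h.2]⟩
    · rintro (⟨h, -⟩ | ⟨-, h1, h2⟩)
      · exact absurd h (not_le.2 hx)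
      · constructor <;> linarith

lemma measurable_S : MeasurableSet (Ymod ⁻¹' Icc y1 y2) :=
  measurable_Ymod measurableSet_Icc

lemma unifSq_inter (h1 : -1 ≤ y1) (h12 : y1 ≤ y2) (h2 : y2 ≤ 1) {t : Set ℝ}
    (ht : MeasurableSet t) :
    unifSq (Ymod ⁻¹' Icc y1 y2 ∩ Prod.fst ⁻¹' t) =
      4⁻¹ * ((volume.restrict (Icc (-1 : ℝ) 1)) (t ∩ Ici 0) *
          ENNReal.ofReal (2 * (max y2 0 - max y1 0)) +
        (volume.restrict (Icc (-1 : ℝ) 1)) (t ∩ Iio 0) *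
          ENNReal.ofReal (2 * (max (-y1) 0 - max (-y2) 0))) := by
  have hset : Ymod ⁻¹' Icc y1 y2 ∩ Prod.fst ⁻¹' t =
      ((t ∩ Ici 0) ×ˢ {y : ℝ | |y| ∈ Icc y1 y2}) ∪
      ((t ∩ Iio 0) ×ˢ {y : ℝ | |y| ∈ Icc (-y2) (-y1)}) := by
    rw [preim_decomp, union_inter_distrib_right]
    congr 1 <;> · ext ⟨x, y⟩
                  simp only [mem_inter_iff, mem_prod, mem_preimage, mem_Ici, mem_Iio,
                    mem_setOf_eq]
                  tauto
  rw [hset, unifSq, Measure.smul_apply, smul_eq_mul]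
  congr 1
  rw [measure_union ?_ ((ht.inter measurableSet_Iio).prod (measurable_absB _ _)),
    Measure.prod_prod, Measure.prod_prod,
    Measure.restrict_apply (measurable_absB y1 y2),
    Measure.restrict_apply (measurable_absB (-y2) (-y1)),
    measB y1 y2 h12 h2, measB (-y2) (-y1) (by linarith) (by linarith)]
  · rw [Set.disjoint_left]
    rintro ⟨x, y⟩ hxy hxy'
    have hxp : (0:ℝ) ≤ x := hxy.1.2
    have hxn : x < 0 := hxy'.1.2
    linarith

lemma unifSq_fst {t : Set ℝ} (ht : MeasurableSet t) :
    unifSq (Prod.fst ⁻¹' t) = 4⁻¹ * ((volume.restrict (Icc (-1 : ℝ) 1)) t * 2) := by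
  have : (Prod.fst ⁻¹' t : Set (ℝ × ℝ)) = t ×ˢ univ := by
    ext ⟨x, y⟩; simp
  rw [this, unifSq, Measure.smul_apply, smul_eq_mul, Measure.prod_prod,
    Measure.restrict_apply_univ, Real.volume_Icc]
  norm_num

-- the conditional expectation candidate
noncomputable def gfun : ℝ → ℝ :=
  fun x => if 0 ≤ x then max y2 0 - max y1 0 else max (-y1) 0 - max (-y2) 0

lemma indC_eq : indC (Icc y1 y2) = (Ymod ⁻¹' Icc y1 y2).indicator (fun _ => (1:ℝ)) := by
  funext ω
  by_cases h : Ymod ω ∈ Icc y1 y2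
  · rw [indC, indicator_of_mem h, indicator_of_mem (show ω ∈ Ymod ⁻¹' Icc y1 y2 from h)]
    rfl
  · rw [indC, indicator_of_notMem h,
      indicator_of_notMem (show ω ∉ Ymod ⁻¹' Icc y1 y2 from h)]

lemma integrable_indC : Integrable (indC (Icc y1 y2)) unifSq := by
  rw [indC_eq]
  exact (integrable_const (1:ℝ)).indicator (measurable_S y1 y2)

-- integral of a function of the first coordinate only (two-valued)
lemma step_eq (c d : ℝ) :
    (fun ω : ℝ × ℝ => if 0 ≤ ω.1 then c else d) =
      fun ω => d + (c - d) * (Prod.fst ⁻¹' Ici (0:ℝ)).indicator (fun _ => (1:ℝ)) ω := by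
  funext ω
  by_cases h : (0:ℝ) ≤ ω.1
  · rw [if_pos h, indicator_of_mem (by exact h : ω ∈ Prod.fst ⁻¹' Ici (0:ℝ))]
    simp
  · rw [if_neg h, indicator_of_notMem (by exact h : ω ∉ Prod.fst ⁻¹' Ici (0:ℝ))]
    simp

lemma meas_P : MeasurableSet (Prod.fst ⁻¹' Ici (0:ℝ) : Set (ℝ × ℝ)) :=
  measurable_fst measurableSet_Ici

lemma unifSq_P : unifSq (Prod.fst ⁻¹' Ici (0:ℝ)) = 2⁻¹ := by
  rw [unifSq_fst measurableSet_Ici, vol_r_Ici]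
  rw [show (4:ENNReal)⁻¹ * (1 * 2) = 2 * 4⁻¹ by ring]
  rw [show (4:ENNReal) = 2 * 2 by norm_num, ENNReal.mul_inv (by norm_num) (by norm_num)]
  rw [← mul_assoc, ENNReal.mul_inv_cancel (by norm_num) (by norm_num), one_mul]

lemma integral_step (c d : ℝ) :
    ∫ ω, (if 0 ≤ ω.1 then c else d) ∂unifSq = (c + d) / 2 := by
  rw [step_eq c d]
  rw [integral_add (integrable_const d)
    (((integrable_const (1:ℝ)).indicator meas_P).const_mul (c - d))]
  rw [integral_const, integral_const_mul, integral_indicator meas_P, setIntegral_const]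
  simp only [measureReal_def]
  rw [unifSq_P]
  simp only [measure_univ, ENNReal.toReal_one, smul_eq_mul, one_mul]
  rw [show ((2:ENNReal)⁻¹).toReal = 2⁻¹ by simp]
  ring

lemma integrable_step (c d : ℝ) :
    Integrable (fun ω : ℝ × ℝ => if 0 ≤ ω.1 then c else d) unifSq := by
  rw [step_eq c d]
  exact (integrable_const d).add
    (((integrable_const (1:ℝ)).indicator meas_P).const_mul (c - d))

lemma memLp_step (c d : ℝ) :
    MemLp (fun ω : ℝ × ℝ => if 0 ≤ ω.1 then c else d) 2 unifSq := by
  rw [step_eq c d]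
  exact (memLp_const d).add
    ((memLp_indicator_const 2 meas_P (1:ℝ) (Or.inr (measure_ne_top _ _))).const_mul (c - d))

end Main
section Final

variable (y1 y2 : ℝ)

lemma max_sub_max (y : ℝ) : max y 0 - max (-y) 0 = y := by
  rcases le_total 0 y with h | h
  · rw [max_eq_left h, max_eq_right (by linarith)]; ring
  · rw [max_eq_right h, max_eq_left (by linarith)]; ring

lemma max_add_max (y : ℝ) : max y 0 + max (-y) 0 = |y| := by
  rcases le_total 0 y with h | h
  · rw [max_eq_left h, max_eq_right (by linarith), abs_of_nonneg h]; ring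
  · rw [max_eq_right h, max_eq_left (by linarith), abs_of_nonpos h]; ring

lemma setIntegral_step_eq (h1 : -1 ≤ y1) (h12 : y1 ≤ y2) (h2 : y2 ≤ 1) {t : Set ℝ}
    (ht : MeasurableSet t) :
    ∫ ω in Prod.fst ⁻¹' t,
        (if 0 ≤ ω.1 then max y2 0 - max y1 0 else max (-y1) 0 - max (-y2) 0) ∂unifSq =
      ∫ ω in Prod.fst ⁻¹' t, indC (Icc y1 y2) ω ∂unifSq := by
  set A := max y2 0 - max y1 0 with hA
  set B := max (-y1) 0 - max (-y2) 0 with hB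
  have hA0 : 0 ≤ A := by
    have := max_le_max (le_refl (0:ℝ)) h12
    simp only [max_comm] at this
    simp only [hA, sub_nonneg]
    exact max_le_max h12 le_rfl
  have hB0 : 0 ≤ B := by
    simp only [hB, sub_nonneg]
    exact max_le_max (by linarith) le_rfl
  -- RHS
  have hRHS : ∫ ω in Prod.fst ⁻¹' t, indC (Icc y1 y2) ω ∂unifSq =
      (unifSq (Ymod ⁻¹' Icc y1 y2 ∩ Prod.fst ⁻¹' t)).toReal := by
    rw [indC_eq, setIntegral_indicator (measurable_S y1 y2), setIntegral_const, smul_eq_mul,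
      mul_one, inter_comm, measureReal_def]
  -- LHS : decompose
  have hsplit : (Prod.fst ⁻¹' t : Set (ℝ × ℝ)) =
      Prod.fst ⁻¹' (t ∩ Ici 0) ∪ Prod.fst ⁻¹' (t ∩ Iio 0) := by
    ext ⟨x, y⟩
    simp only [mem_preimage, mem_union, mem_inter_iff, mem_Ici, mem_Iio]
    constructor
    · intro h; rcases le_or_gt 0 x with hx | hx
      · exact Or.inl ⟨h, hx⟩
      · exact Or.inr ⟨h, hx⟩
    · rintro (⟨h, -⟩ | ⟨h, -⟩) <;> exact h
  have hLHS : ∫ ω in Prod.fst ⁻¹' t,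
      (if 0 ≤ ω.1 then A else B) ∂unifSq =
      A * (unifSq (Prod.fst ⁻¹' (t ∩ Ici 0))).toReal +
        B * (unifSq (Prod.fst ⁻¹' (t ∩ Iio 0))).toReal := by
    rw [step_eq]
    rw [integral_add (integrable_const B).integrableOn
      ((((integrable_const (1:ℝ)).indicator meas_P).const_mul (A - B)).integrableOn)]
    rw [setIntegral_const, integral_const_mul, setIntegral_indicator meas_P, setIntegral_const]
    simp only [measureReal_def]
    have hP : (Prod.fst ⁻¹' t ∩ Prod.fst ⁻¹' Ici (0:ℝ) : Set (ℝ × ℝ)) = Prod.fst ⁻¹' (t ∩ Ici 0) := by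
      ext ⟨x, y⟩
      simp only [mem_inter_iff, mem_preimage, mem_Ici]
    have hsum : unifSq (Prod.fst ⁻¹' t) =
        unifSq (Prod.fst ⁻¹' (t ∩ Ici 0)) + unifSq (Prod.fst ⁻¹' (t ∩ Iio 0)) := by
      rw [hsplit]
      rw [measure_union ?_ (measurable_fst (ht.inter measurableSet_Iio))]
      rw [Set.disjoint_left]
      rintro ⟨x, y⟩ hxy hxy'
      have hp : (0:ℝ) ≤ x := hxy.2
      have hn : x < 0 := hxy'.2
      linarith
    rw [hsum, hP, ENNReal.toReal_add (measure_ne_top _ _) (measure_ne_top _ _)]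
    simp only [smul_eq_mul, mul_one]
    ring
  rw [hLHS, hRHS, unifSq_inter y1 y2 h1 h12 h2 ht,
    unifSq_fst (ht.inter measurableSet_Ici), unifSq_fst (ht.inter measurableSet_Iio)]
  have hne1 := vol_r_ne_top (t ∩ Ici 0)
  have hne2 := vol_r_ne_top (t ∩ Iio 0)
  simp only [ENNReal.toReal_mul]
  rw [ENNReal.toReal_add (ENNReal.mul_ne_top hne1 ENNReal.ofReal_ne_top)
      (ENNReal.mul_ne_top hne2 ENNReal.ofReal_ne_top)]
  simp only [ENNReal.toReal_mul, ENNReal.toReal_ofNat, ENNReal.toReal_inv]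
  rw [← hA, ← hB,
    ENNReal.toReal_ofReal (by linarith : (0:ℝ) ≤ 2 * A),
    ENNReal.toReal_ofReal (by linarith : (0:ℝ) ≤ 2 * B)]
  ring

lemma condexp_eq (h1 : -1 ≤ y1) (h12 : y1 ≤ y2) (h2 : y2 ≤ 1) :
    (fun ω : ℝ × ℝ => if 0 ≤ ω.1 then max y2 0 - max y1 0 else max (-y1) 0 - max (-y2) 0)
      =ᵐ[unifSq]
    unifSq[indC (Icc y1 y2) | MeasurableSpace.comap Prod.fst inferInstance] := by
  refine ae_eq_condExp_of_forall_setIntegral_eq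
    (measurable_fst.comap_le) (integrable_indC y1 y2) (fun s _ _ => ?_) (fun s hs _ => ?_) ?_
  · exact (integrable_step _ _).integrableOn
  · rw [MeasurableSpace.measurableSet_comap] at hs
    obtain ⟨t, ht, rfl⟩ := hs
    exact setIntegral_step_eq y1 y2 h1 h12 h2 ht
  · refine StronglyMeasurable.aestronglyMeasurable (Measurable.stronglyMeasurable ?_)
    have hfst : Measurable[MeasurableSpace.comap Prod.fst inferInstance]
        (Prod.fst : ℝ × ℝ → ℝ) := Measurable.of_comap_le le_rfl
    have hg : Measurable (fun x : ℝ =>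
        if 0 ≤ x then max y2 0 - max y1 0 else max (-y1) 0 - max (-y2) 0) :=
      Measurable.ite measurableSet_Ici measurable_const measurable_const
    exact hg.comp hfst

lemma unifSq_S (h1 : -1 ≤ y1) (h12 : y1 ≤ y2) (h2 : y2 ≤ 1) :
    (unifSq (Ymod ⁻¹' Icc y1 y2)).toReal = (y2 - y1) / 2 := by
  have h := unifSq_inter y1 y2 h1 h12 h2 MeasurableSet.univ
  rw [show (Prod.fst ⁻¹' (univ : Set ℝ) : Set (ℝ × ℝ)) = univ from preimage_univ,
    inter_univ, univ_inter, univ_inter, vol_r_Ici, vol_r_Iio, one_mul, one_mul] at h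
  rw [h, ENNReal.toReal_mul,
    ENNReal.toReal_add ENNReal.ofReal_ne_top ENNReal.ofReal_ne_top,
    ENNReal.toReal_ofReal, ENNReal.toReal_ofReal]
  · simp only [ENNReal.toReal_inv, ENNReal.toReal_ofNat]
    have := max_sub_max y1
    have := max_sub_max y2
    nlinarith [max_sub_max y1, max_sub_max y2]
  · nlinarith [max_le_max (show -y2 ≤ -y1 by linarith) (le_refl (0:ℝ))]
  · nlinarith [max_le_max h12 (le_refl (0:ℝ))]

lemma variance_indC (h1 : -1 ≤ y1) (h12 : y1 ≤ y2) (h2 : y2 ≤ 1) :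
    variance (indC (Icc y1 y2)) unifSq = (y2 - y1) / 2 - ((y2 - y1) / 2) ^ 2 := by
  have hmem : MemLp (indC (Icc y1 y2)) 2 unifSq := by
    rw [indC_eq]
    exact memLp_indicator_const 2 (measurable_S y1 y2) (1:ℝ) (Or.inr (measure_ne_top _ _))
  rw [variance_eq_sub hmem]
  have hsq : (indC (Icc y1 y2)) ^ 2 = indC (Icc y1 y2) := by
    funext ω
    simp only [Pi.pow_apply, indC_eq]
    by_cases h : ω ∈ Ymod ⁻¹' Icc y1 y2
    · rw [indicator_of_mem h]; norm_num
    · rw [indicator_of_notMem h]; norm_num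
  have hmean : ∫ ω, indC (Icc y1 y2) ω ∂unifSq = (y2 - y1) / 2 := by
    rw [indC_eq, integral_indicator (measurable_S y1 y2), setIntegral_const, smul_eq_mul,
      mul_one, measureReal_def]
    exact unifSq_S y1 y2 h1 h12 h2
  rw [hsq, hmean]

lemma variance_step (h1 : -1 ≤ y1) (h12 : y1 ≤ y2) (h2 : y2 ≤ 1) :
    variance (fun ω : ℝ × ℝ =>
        if 0 ≤ ω.1 then max y2 0 - max y1 0 else max (-y1) 0 - max (-y2) 0) unifSq =
      ((|y2| - |y1|) / 2) ^ 2 := by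
  set A := max y2 0 - max y1 0 with hA
  set B := max (-y1) 0 - max (-y2) 0 with hB
  rw [variance_eq_sub (memLp_step A B)]
  have hsq : (fun ω : ℝ × ℝ => if 0 ≤ ω.1 then A else B) ^ 2 =
      fun ω : ℝ × ℝ => if 0 ≤ ω.1 then A ^ 2 else B ^ 2 := by
    funext ω
    simp only [Pi.pow_apply]
    by_cases h : (0:ℝ) ≤ ω.1 <;> simp [h]
  rw [hsq, integral_step, integral_step]
  have hAB : A - B = |y2| - |y1| := by
    rw [hA, hB]
    have h2' := max_add_max y2
    have h1' := max_add_max y1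
    have h2'' := max_sub_max y2
    have h1'' := max_sub_max y1
    linarith
  rw [show (A ^ 2 + B ^ 2) / 2 - ((A + B) / 2) ^ 2 = ((A - B) / 2) ^ 2 from by ring, hAB]

end Final

theorem stmt14 (y1 y2 : ℝ) (h1 : -1 ≤ y1) (h12 : y1 < y2) (h2 : y2 ≤ 1)
    (hne : (y1, y2) ≠ (-1, 1)) :
    SIdx Prod.fst (Icc y1 y2) = (|y2| - |y1|) ^ 2 / ((y2 - y1) * (2 - y2 + y1)) ∧
    (|y2| - |y1|) ^ 2 / ((y2 - y1) * (2 - y2 + y1)) ≤ 1 ∧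
    ((|y2| - |y1|) ^ 2 / ((y2 - y1) * (2 - y2 + y1)) = 1 ↔
      (y1, y2) = (-1, 0) ∨ (y1, y2) = (0, 1)) := by
  have hlt2 : y2 - y1 < 2 := by
    rcases lt_or_eq_of_le (show y2 - y1 ≤ 2 by linarith) with h | h
    · exact h
    · exfalso
      apply hne
      have hy1 : y1 = -1 := by linarith
      have hy2 : y2 = 1 := by linarith
      rw [hy1, hy2]
  have hDpos : 0 < (y2 - y1) * (2 - y2 + y1) :=
    mul_pos (by linarith) (by linarith)
  have hsle : (|y2| - |y1|) ^ 2 ≤ (y2 - y1) * (2 - y2 + y1) := by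
    rcases le_or_gt 0 y1 with hy1 | hy1
    · rw [abs_of_nonneg (by linarith : (0:ℝ) ≤ y2), abs_of_nonneg hy1]
      nlinarith
    · rcases le_or_gt y2 0 with hy2 | hy2
      · rw [abs_of_nonpos hy2, abs_of_nonpos hy1.le]
        nlinarith
      · rw [abs_of_pos hy2, abs_of_neg hy1]
        nlinarith
  refine ⟨?_, ?_, ?_⟩
  · -- main computation
    rw [SIdx, ← variance_congr' (condexp_eq y1 y2 h1 h12.le h2),
      variance_step y1 y2 h1 h12.le h2, variance_indC y1 y2 h1 h12.le h2]
    have hden : (y2 - y1) / 2 - ((y2 - y1) / 2) ^ 2 = (y2 - y1) * (2 - y2 + y1) / 4 := by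
      ring
    have hnum : ((|y2| - |y1|) / 2) ^ 2 = (|y2| - |y1|) ^ 2 / 4 := by ring
    rw [hden, hnum]
    have hD : (y2 - y1) * (2 - y2 + y1) ≠ 0 := hDpos.ne'
    field_simp
  · exact div_le_one_of_le₀ hsle hDpos.le
  · constructor
    · intro h
      have hseq : (|y2| - |y1|) ^ 2 = (y2 - y1) * (2 - y2 + y1) :=
        (div_eq_one_iff_eq hDpos.ne').1 h
      rcases le_or_gt 0 y1 with hy1 | hy1
      · right
        rw [abs_of_nonneg (by linarith : (0:ℝ) ≤ y2), abs_of_nonneg hy1] at hseq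
        have hd1 : y2 - y1 = 1 := by nlinarith
      -- y1 ≥ 0, y2 = y1 + 1 ≤ 1 so y1 ≤ 0 hence y1 = 0
        have : y1 = 0 := by linarith
        have : y2 = 1 := by linarith
        simp [Prod.ext_iff]
        constructor <;> linarith
      · rcases le_or_gt y2 0 with hy2 | hy2
        · left
          rw [abs_of_nonpos hy2, abs_of_nonpos hy1.le] at hseq
          have hd1 : y2 - y1 = 1 := by nlinarith
          simp [Prod.ext_iff]
          constructor <;> linarith
        · exfalso
          rw [abs_of_pos hy2, abs_of_neg hy1] at hseq
          have hzero : y2 * (1 - y2) + (-y1) * (1 + y1) = 0 := by nlinarith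
          have t1 : 0 ≤ y2 * (1 - y2) := mul_nonneg hy2.le (by linarith)
          have t2 : 0 ≤ (-y1) * (1 + y1) := mul_nonneg (by linarith) (by linarith)
          have hy2' : y2 = 1 := by nlinarith
          have hy1' : y1 = -1 := by nlinarith
          exact hne (by rw [hy1', hy2'])
    · rintro (h | h) <;>
      · rw [Prod.mk.injEq] at h
        obtain ⟨e1, e2⟩ := h
        subst e1; subst e2
        norm_num
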